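/- arXiv:1909.00625 — 2 statements merged into one kernel-verified Lean document; each statement's English description precedes it below -/
import Mathlib

section
/- Every concave distribution function F on [0,∞) with F(0) = 0 admits a mixture representation F(x) = ∫ min(x,θ)/θ dG(θ) for some probability measure G on (0,∞), possibly with an atom structure; equivalently, a concave distribution function on [0,∞) is a scale mixture of uniform distribution functions. -/
/-!
Since `F` is concave, it is the integral of its right derivative `f`, which is nonnegative,
nonincreasing and tends to `0` at infinity. Hence `f(t) = μ (t, ∞)` for almost every `t > 0`,
for some measure `μ` on `(0, ∞)`; as `f` may blow up at `0`, `μ` is built from the Stieltjes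
function `s ↦ -f (exp s)` and pushed forward along `exp`. By the layer-cake formula
`∫ min(x, θ) dμ(θ) = ∫₀ˣ μ (s, ∞) ds = F x`, and `G = θ μ(dθ)` is the mixing measure; its
total mass is `lim F = 1`.
-/

open MeasureTheory Filter Set
open scoped Topology

namespace ConcaveOn

variable {S : Set ℝ} {f : ℝ → ℝ} {x y : ℝ}

lemma hasDerivWithinAt_rightDeriv_of_mem_interior (hfc : ConcaveOn ℝ S f)
    (hx : x ∈ interior S) : HasDerivWithinAt f (derivWithin f (Ioi x) x) (Ioi x) x := by
  simpa using (hfc.neg.differentiableWithinAt_Ioi_of_mem_interior hx).neg.hasDerivWithinAt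

lemma antitoneOn_rightDeriv (hfc : ConcaveOn ℝ S f) :
    AntitoneOn (fun x ↦ derivWithin f (Ioi x) x) (interior S) := by
  intro x hx y hy hxy
  simpa [derivWithin.neg] using hfc.neg.monotoneOn_rightDeriv hx hy hxy

lemma rightDeriv_le_slope_of_mem_interior (hfc : ConcaveOn ℝ S f) (hx : x ∈ S)
    (hy : y ∈ interior S) (hxy : x < y) : derivWithin f (Ioi y) y ≤ slope f x y := by
  have := (hfc.neg.slope_le_leftDeriv_of_mem_interior hx hy hxy).trans
    (hfc.neg.leftDeriv_le_rightDeriv_of_mem_interior hy)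
  simpa [derivWithin.neg, slope_neg_fun] using this

end ConcaveOn

lemma lintegral_ofReal_eq_sub_of_hasDeriv_right_of_nonneg {g g' : ℝ → ℝ} {a b : ℝ}
    (hab : a ≤ b) (hcont : ContinuousOn g (Icc a b))
    (hderiv : ∀ x ∈ Ioo a b, HasDerivWithinAt g (g' x) (Ioi x) x)
    (hnonneg : ∀ x ∈ Ioo a b, 0 ≤ g' x) :
    ∫⁻ x in Ioc a b, ENNReal.ofReal (g' x) = ENNReal.ofReal (g b - g a) := by
  have hint := intervalIntegral.integrableOn_deriv_right_of_nonneg hcont hderiv hnonneg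
  rw [← intervalIntegral.integral_eq_sub_of_hasDeriv_right_of_le hab hcont hderiv
      ((intervalIntegrable_iff_integrableOn_Ioc_of_le hab).2 hint),
    intervalIntegral.integral_of_le hab, ofReal_integral_eq_lintegral_ofReal hint]
  rw [Measure.restrict_congr_set Ioo_ae_eq_Ioc.symm]
  exact (ae_restrict_iff' measurableSet_Ioo).2 (ae_of_all _ hnonneg)

lemma lintegral_ofReal_min_eq_setLIntegral_measure_Ioi {μ : Measure ℝ} (hμ : ∀ᵐ θ ∂μ, 0 ≤ θ)
    {x : ℝ} (hx : 0 ≤ x) :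
    ∫⁻ θ, ENNReal.ofReal (min x θ) ∂μ = ∫⁻ s in Ioc 0 x, μ (Ioi s) := by
  rw [lintegral_eq_lintegral_meas_lt μ (hμ.mono fun θ hθ ↦ le_min hx hθ)
      (measurable_const.min measurable_id).aemeasurable,
    ← Measure.restrict_congr_set Ioo_ae_eq_Ioc, ← Ioi_inter_Iio, inter_comm,
    ← Measure.restrict_restrict measurableSet_Iio, ← lintegral_indicator measurableSet_Iio]
  congr 1 with s
  by_cases hs : s < x
  · simp [hs, indicator_of_mem, Ioi]
  · simp [hs]

lemma tendsto_lintegral_ofReal_min_natCast (μ : Measure ℝ) :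
    Tendsto (fun n : ℕ ↦ ∫⁻ θ, ENNReal.ofReal (min n θ) ∂μ) atTop
      (𝓝 (∫⁻ θ, ENNReal.ofReal θ ∂μ)) := by
  refine lintegral_tendsto_of_tendsto_of_monotone
    (fun n ↦ (measurable_const.min measurable_id).ennreal_ofReal.aemeasurable)
    (ae_of_all _ fun θ m n hmn ↦
      ENNReal.ofReal_le_ofReal (min_le_min_right θ (by exact_mod_cast hmn)))
    (ae_of_all _ fun θ ↦ ?_)
  refine tendsto_const_nhds.congr' ?_
  filter_upwards [(tendsto_natCast_atTop_atTop (R := ℝ)).eventually_ge_atTop θ] with n hn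
  rw [min_eq_right hn]

lemma lintegral_withDensity_ofReal_div_self {μ : Measure ℝ} (hμ : ∀ᵐ θ ∂μ, 0 < θ) {g : ℝ → ℝ}
    (hg : Measurable g) :
    ∫⁻ θ, ENNReal.ofReal (g θ / θ) ∂μ.withDensity (fun θ ↦ ENNReal.ofReal θ)
      = ∫⁻ θ, ENNReal.ofReal (g θ) ∂μ := by
  rw [lintegral_withDensity_eq_lintegral_mul₀ (f := fun θ ↦ ENNReal.ofReal θ)
    (g := fun θ ↦ ENNReal.ofReal (g θ / θ)) measurable_id.ennreal_ofReal.aemeasurable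
    (hg.div measurable_id).ennreal_ofReal.aemeasurable]
  refine lintegral_congr_ae (hμ.mono fun θ hθ ↦ ?_)
  rw [Pi.mul_apply, ← ENNReal.ofReal_mul hθ.le, mul_div_cancel₀ _ hθ.ne']

lemma exists_measure_Ioi_ae_eq_of_antitoneOn {φ : ℝ → ℝ} (hφ : AntitoneOn φ (Ioi 0))
    (hlim : Tendsto φ atTop (𝓝 0)) :
    ∃ μ : Measure ℝ, μ (Ioi 0)ᶜ = 0 ∧ ∀ᵐ t, 0 < t → μ (Ioi t) = ENNReal.ofReal (φ t) := by
  set k : ℝ → ℝ := fun s ↦ -φ (Real.exp s)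
  have hk : Monotone k := fun s s' h ↦
    neg_le_neg (hφ (Real.exp_pos s) (Real.exp_pos s') (Real.exp_le_exp.2 h))
  have hk_lim : Tendsto k atTop (𝓝 0) := by
    simpa [k] using (hlim.comp Real.tendsto_exp_atTop).neg
  set K := hk.stieltjesFunction
  refine ⟨K.measure.map Real.exp, ?_, ?_⟩
  · rw [Measure.map_apply Real.measurable_exp measurableSet_Ioi.compl]
    convert measure_empty (μ := K.measure)
    ext s
    simp [Real.exp_pos s]
  · have hD : (Real.exp '' {s | ¬ContinuousAt k s}).Countable :=
      hk.countable_not_continuousAt.image _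
    filter_upwards [hD.ae_notMem volume] with t ht htpos
    rw [Measure.map_apply Real.measurable_exp measurableSet_Ioi]
    have hpre : Real.exp ⁻¹' Ioi t = Ioi (Real.log t) := by
      ext s
      simp [Real.log_lt_iff_lt_exp htpos]
    have hcont : ContinuousAt k (Real.log t) := by
      by_contra h
      exact ht ⟨_, h, Real.exp_log htpos⟩
    rw [hpre, K.measure_Ioi (tendsto_rightLim_atTop_of_tendsto hk_lim), zero_sub,
      hk.stieltjesFunction_eq, hcont.continuousWithinAt.rightLim_eq]
    simp [k, Real.exp_log htpos]

section ConcaveDistributionFunction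

variable {F : ℝ → ℝ}

lemma tendsto_rightDeriv_atTop_of_concaveOn_Ici (hmono : MonotoneOn F (Ici 0))
    (hconc : ConcaveOn ℝ (Ici 0) F) {l : ℝ} (hlim : Tendsto F atTop (𝓝 l)) :
    Tendsto (fun t ↦ derivWithin F (Ioi t) t) atTop (𝓝 0) := by
  have hslope : Tendsto (fun t ↦ slope F 0 t) atTop (𝓝 0) := by
    simpa [slope_def_field] using (hlim.sub_const (F 0)).div_atTop tendsto_id
  refine tendsto_of_tendsto_of_tendsto_of_le_of_le' tendsto_const_nhds hslope ?_ ?_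
  · filter_upwards [eventually_ge_atTop 0] with t ht
    exact (hmono.mono (Ioi_subset_Ici ht)).derivWithin_nonneg
  · filter_upwards [eventually_gt_atTop 0] with t ht
    exact hconc.rightDeriv_le_slope_of_mem_interior self_mem_Ici (by simpa using ht) ht

lemma lintegral_rightDeriv_eq_sub_of_concaveOn_Ici (hmono : MonotoneOn F (Ici 0))
    (hrc : ContinuousWithinAt F (Ici 0) 0) (hconc : ConcaveOn ℝ (Ici 0) F) {x : ℝ}
    (hx : 0 ≤ x) :
    ∫⁻ t in Ioc 0 x, ENNReal.ofReal (derivWithin F (Ioi t) t) = ENNReal.ofReal (F x - F 0) := by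
  refine lintegral_ofReal_eq_sub_of_hasDeriv_right_of_nonneg hx ?_
    (fun t ht ↦ hconc.hasDerivWithinAt_rightDeriv_of_mem_interior (by simpa using ht.1))
    (fun t ht ↦ (hmono.mono (Ioi_subset_Ici ht.1.le)).derivWithin_nonneg)
  intro t ht
  rcases ht.1.eq_or_lt with rfl | htpos
  · exact hrc.mono Icc_subset_Ici_self
  · exact (hconc.continuousOn_interior.continuousAt
      (by simpa using Ioi_mem_nhds htpos)).continuousWithinAt

lemma exists_measure_lintegral_ofReal_min_eq (hmono : MonotoneOn F (Ici 0))
    (hrc : ContinuousWithinAt F (Ici 0) 0) (hconc : ConcaveOn ℝ (Ici 0) F) (h0 : F 0 = 0)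
    {l : ℝ} (hlim : Tendsto F atTop (𝓝 l)) :
    ∃ μ : Measure ℝ, μ (Ioi 0)ᶜ = 0 ∧
      ∀ x, 0 ≤ x → ∫⁻ θ, ENNReal.ofReal (min x θ) ∂μ = ENNReal.ofReal (F x) := by
  obtain ⟨μ, hμ0, hμ⟩ := exists_measure_Ioi_ae_eq_of_antitoneOn
    (by simpa using hconc.antitoneOn_rightDeriv)
    (tendsto_rightDeriv_atTop_of_concaveOn_Ici hmono hconc hlim)
  refine ⟨μ, hμ0, fun x hx ↦ ?_⟩
  have hμpos : ∀ᵐ θ ∂μ, 0 < θ := mem_ae_iff.2 hμ0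
  calc ∫⁻ θ, ENNReal.ofReal (min x θ) ∂μ
      = ∫⁻ t in Ioc 0 x, ENNReal.ofReal (derivWithin F (Ioi t) t) := by
        rw [lintegral_ofReal_min_eq_setLIntegral_measure_Ioi (hμpos.mono fun _ ↦ le_of_lt) hx]
        exact setLIntegral_congr_fun_ae measurableSet_Ioc (hμ.mono fun t ht hmem ↦ ht hmem.1)
    _ = ENNReal.ofReal (F x) := by
        rw [lintegral_rightDeriv_eq_sub_of_concaveOn_Ici hmono hrc hconc hx, h0, sub_zero]

end ConcaveDistributionFunction

/-- Every concave distribution function F on [0,∞) with F(0)=0 is a scale mixture of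
uniform distribution functions: F(x) = ∫ min(x,θ)/θ dG(θ) for some probability
measure G on (0,∞). -/
theorem stmt2 (F : ℝ → ℝ)
    (hmono : MonotoneOn F (Set.Ici (0:ℝ)))
    (hrc : ∀ x : ℝ, 0 ≤ x → ContinuousWithinAt F (Set.Ici x) x)
    (hconc : ConcaveOn ℝ (Set.Ici (0:ℝ)) F)
    (h0 : F 0 = 0)
    (hlim : Tendsto F atTop (nhds 1)) :
    ∃ G : Measure ℝ, IsProbabilityMeasure G ∧ G (Set.Ioi (0:ℝ))ᶜ = 0 ∧
      ∀ x : ℝ, 0 ≤ x → F x = ∫ θ, min x θ / θ ∂G := by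
  obtain ⟨μ, hμ0, hμF⟩ :=
    exists_measure_lintegral_ofReal_min_eq hmono (hrc 0 le_rfl) hconc h0 hlim
  have hμpos : ∀ᵐ θ ∂μ, 0 < θ := mem_ae_iff.2 hμ0
  set G := μ.withDensity fun θ ↦ ENNReal.ofReal θ
  have hGμ : G ≪ μ := withDensity_absolutelyContinuous μ _
  refine ⟨G, ⟨?_⟩, hGμ hμ0, fun x hx ↦ ?_⟩
  · rw [withDensity_apply _ MeasurableSet.univ, Measure.restrict_univ, ← ENNReal.ofReal_one]
    refine tendsto_nhds_unique (tendsto_lintegral_ofReal_min_natCast μ) ?_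
    exact (ENNReal.tendsto_ofReal (hlim.comp tendsto_natCast_atTop_atTop)).congr fun n ↦
      (hμF n n.cast_nonneg).symm
  · have hGnonneg : ∀ᵐ θ ∂G, 0 ≤ min x θ / θ :=
      Eventually.mono (hGμ.ae_le hμpos) fun θ (hθ : 0 < θ) ↦ div_nonneg (le_min hx hθ.le) hθ.le
    rw [integral_eq_lintegral_of_nonneg_ae hGnonneg
        (by fun_prop : Measurable fun θ ↦ min x θ / θ).aestronglyMeasurable,
      lintegral_withDensity_ofReal_div_self hμpos (g := fun θ ↦ min x θ) (by fun_prop),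
      hμF x hx, ENNReal.toReal_ofReal (h0 ▸ hmono self_mem_Ici hx hx)]
end

section
/- Let w_1,…,w_N > 0 with ∑ w_i = 1 and let P be a probability measure on (0,∞) such that P(U_i) ≥ c·w_i for disjoint sets U_i ⊆ [i/m, (i+ε)/m], where c = e^{−η/4} and 0 < ε < 1. Define f_m(x) = ∑_{i=1}^N w_i·(m/i)·1{x ≤ i/m} and f_P(x) = ∫ (1/θ)·1{x ≤ θ} dP(θ). Then for all x ≥ 0, f_m(x) ≤ (1+ε)·e^{η/4}·f_P(x) whenever f_P(x) > 0. -/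
open MeasureTheory

/-! On the piece `U i ⊆ [i/m, (i+ε)/m]` the integrand of `f_P(x)` is at least `m/(i+ε)` whenever
`x ≤ i/m`, so integrating over the disjoint pieces gives
`f_P(x) ≥ ∑ᵢ (m/(i+ε)) 1{x ≤ i/m} P(Uᵢ) ≥ e^{-η/4} ∑ᵢ (m/(i+ε)) wᵢ 1{x ≤ i/m}`,
and `m/i ≤ (1+ε) m/(i+ε)` compares the last sum with `f_m(x)` term by term. -/

theorem sum_mul_measureReal_le_integral {α ι : Type*} [MeasurableSpace α] {μ : Measure α}
    [IsFiniteMeasure μ] {s : Finset ι} {U : ι → Set α} {c : ι → ℝ} {g : α → ℝ}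
    (hg : Integrable g μ) (hg0 : 0 ≤ᵐ[μ] g) (hU : ∀ i ∈ s, MeasurableSet (U i))
    (hdisj : (s : Set ι).Pairwise (Function.onFun Disjoint U))
    (hc : ∀ i ∈ s, ∀ a ∈ U i, c i ≤ g a) :
    ∑ i ∈ s, c i * μ.real (U i) ≤ ∫ a, g a ∂μ :=
  calc ∑ i ∈ s, c i * μ.real (U i)
      ≤ ∑ i ∈ s, ∫ a in U i, g a ∂μ := Finset.sum_le_sum fun i hi =>
        setIntegral_ge_of_const_le_real (hU i hi) (measure_ne_top μ _) (hc i hi) hg.integrableOn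
    _ = ∫ a in ⋃ i ∈ s, U i, g a ∂μ :=
        (integral_biUnion_finset s hU hdisj fun _ _ => hg.integrableOn).symm
    _ ≤ ∫ a, g a ∂μ := setIntegral_le_integral hg hg0

theorem one_div_mul_ite_le_one_div_mul_ite {x a b θ : ℝ} (ha : 0 < a)
    (hθ : θ ∈ Set.Icc a b) :
    1 / b * (if x ≤ a then 1 else 0) ≤ 1 / θ * (if x ≤ θ then 1 else 0) := by
  have hθ0 : 0 < θ := ha.trans_le hθ.1
  by_cases hxa : x ≤ a
  · rw [if_pos hxa, if_pos (hxa.trans hθ.1), mul_one, mul_one]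
    exact one_div_le_one_div_of_le hθ0 hθ.2
  · rw [if_neg hxa, mul_zero]
    split_ifs <;> positivity

theorem div_le_one_add_mul_div_add {m i ε : ℝ} (hm : 0 ≤ m) (hi : 1 ≤ i) (hε : 0 ≤ ε) :
    m / i ≤ (1 + ε) * (m / (i + ε)) := by
  rw [mul_div_assoc', div_le_div_iff₀ (by linarith) (by linarith)]
  nlinarith [mul_le_mul_of_nonneg_left hi (mul_nonneg hm hε)]

theorem mul_div_mul_le_one_add_mul_inv_mul {w p c m i ε t : ℝ} (hw : 0 ≤ w) (ht : 0 ≤ t)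
    (hm : 0 ≤ m) (hi : 1 ≤ i) (hε : 0 ≤ ε) (hc : 0 < c) (hp : c * w ≤ p) :
    w * (m / i) * t ≤ (1 + ε) * c⁻¹ * (m / (i + ε) * t * p) := by
  have hmt : 0 ≤ m / (i + ε) * t := mul_nonneg (div_nonneg hm (by linarith)) ht
  calc w * (m / i) * t ≤ w * ((1 + ε) * (m / (i + ε))) * t := by
        gcongr
        exact div_le_one_add_mul_div_add hm hi hε
    _ = (1 + ε) * c⁻¹ * (m / (i + ε) * t * (c * w)) := by
        field_simp
    _ ≤ (1 + ε) * c⁻¹ * (m / (i + ε) * t * p) := by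
        gcongr

theorem stmt11_general (m N : ℕ) (hm : 0 < m) (ε η : ℝ)
    (hε : 0 < ε)
    (w : ℕ → ℝ) (hw : ∀ i ∈ Finset.Icc 1 N, 0 < w i)
    (P : Measure ℝ) [IsProbabilityMeasure P]
    (U : ℕ → Set ℝ) (hUm : ∀ i, MeasurableSet (U i))
    (hUdisj : ∀ i j, i ≠ j → Disjoint (U i) (U j))
    (hUsub : ∀ i ∈ Finset.Icc 1 N, U i ⊆ Set.Icc ((i:ℝ)/m) (((i:ℝ)+ε)/m))
    (hPU : ∀ i ∈ Finset.Icc 1 N, Real.exp (-η/4) * w i ≤ (P (U i)).toReal)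
    (fm fP : ℝ → ℝ)
    (hfm : ∀ x : ℝ, fm x = ∑ i ∈ Finset.Icc 1 N,
        w i * ((m:ℝ)/i) * (if x ≤ (i:ℝ)/m then (1:ℝ) else 0))
    (hfP : ∀ x : ℝ, fP x = ∫ θ, (1/θ) * (if x ≤ θ then (1:ℝ) else 0) ∂P) :
    ∀ x : ℝ, 0 ≤ x → 0 < fP x → fm x ≤ (1+ε) * Real.exp (η/4) * fP x := by
  intro x hx hfPx
  have hm' : (0 : ℝ) < m := Nat.cast_pos.mpr hm
  set t : ℕ → ℝ := fun i => if x ≤ (i:ℝ)/m then 1 else 0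
  have ht : ∀ i, 0 ≤ t i := fun i => by positivity
  have hone : ∀ i ∈ Finset.Icc 1 N, (1:ℝ) ≤ i := fun i hi =>
    Nat.one_le_cast.mpr (Finset.mem_Icc.mp hi).1
  have hmass : ∑ i ∈ Finset.Icc 1 N, (m / ((i:ℝ) + ε) * t i) * P.real (U i) ≤ fP x := by
    rw [hfP x] at hfPx ⊢
    refine sum_mul_measureReal_le_integral (Integrable.of_integral_ne_zero hfPx.ne')
      (Filter.Eventually.of_forall fun θ => ?_) (fun i _ => hUm i)
      (fun i _ j _ hij => hUdisj i j hij) fun i hi θ hθ => ?_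
    · show (0:ℝ) ≤ 1 / θ * (if x ≤ θ then 1 else 0)
      split_ifs with h
      · exact mul_nonneg (one_div_nonneg.mpr (hx.trans h)) zero_le_one
      · simp
    · have hpos : (0:ℝ) < i / m := div_pos (one_pos.trans_le (hone i hi)) hm'
      simpa only [one_div_div] using one_div_mul_ite_le_one_div_mul_ite hpos (hUsub i hi hθ)
  calc fm x ≤ ∑ i ∈ Finset.Icc 1 N,
        (1 + ε) * Real.exp (η/4) * ((m / ((i:ℝ) + ε) * t i) * P.real (U i)) :=
        (hfm x).trans_le <| Finset.sum_le_sum fun i hi => by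
          have := mul_div_mul_le_one_add_mul_inv_mul (hw i hi).le (ht i) hm'.le (hone i hi)
            hε.le (Real.exp_pos _) (hPU i hi)
          rwa [neg_div, Real.exp_neg, inv_inv] at this
    _ = (1 + ε) * Real.exp (η/4) *
        ∑ i ∈ Finset.Icc 1 N, (m / ((i:ℝ) + ε) * t i) * P.real (U i) := (Finset.mul_sum ..).symm
    _ ≤ (1 + ε) * Real.exp (η/4) * fP x := by gcongr

/-- Density-ratio bound: if P(Uᵢ) ≥ e^{−η/4} wᵢ for disjoint Uᵢ ⊆ [i/m,(i+ε)/m],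
then f_m(x) ≤ (1+ε) e^{η/4} f_P(x) whenever f_P(x) > 0. -/
theorem stmt11 (m N : ℕ) (hm : 0 < m) (hN : 0 < N) (ε η : ℝ)
    (hε : 0 < ε) (hε1 : ε < 1)
    (w : ℕ → ℝ) (hw : ∀ i ∈ Finset.Icc 1 N, 0 < w i)
    (hwsum : ∑ i ∈ Finset.Icc 1 N, w i = 1)
    (P : Measure ℝ) [IsProbabilityMeasure P] (hP : P (Set.Ioi (0:ℝ))ᶜ = 0)
    (U : ℕ → Set ℝ) (hUm : ∀ i, MeasurableSet (U i))
    (hUdisj : ∀ i j, i ≠ j → Disjoint (U i) (U j))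
    (hUsub : ∀ i ∈ Finset.Icc 1 N, U i ⊆ Set.Icc ((i:ℝ)/m) (((i:ℝ)+ε)/m))
    (hPU : ∀ i ∈ Finset.Icc 1 N, Real.exp (-η/4) * w i ≤ (P (U i)).toReal)
    (fm fP : ℝ → ℝ)
    (hfm : ∀ x : ℝ, fm x = ∑ i ∈ Finset.Icc 1 N,
        w i * ((m:ℝ)/i) * (if x ≤ (i:ℝ)/m then (1:ℝ) else 0))
    (hfP : ∀ x : ℝ, fP x = ∫ θ, (1/θ) * (if x ≤ θ then (1:ℝ) else 0) ∂P) :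
    ∀ x : ℝ, 0 ≤ x → 0 < fP x → fm x ≤ (1+ε) * Real.exp (η/4) * fP x :=
  stmt11_general m N hm ε η hε w hw P U hUm hUdisj hUsub hPU fm fP hfm hfP
end
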